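/- arXiv:2405.08791 — 3 statements merged into one kernel-verified Lean document; each statement's English description precedes it below -/
import Mathlib

section
/- Let d ≥ 2 be even and let φ(x) = Σ_{n≥2} α_n xⁿ be a formal power series over ℝ with vanishing constant and linear coefficients satisfying the invariance equation φ(x) − 2(x + φ(x))^d = φ( φ(x) − (x + φ(x))^d ) as formal power series. Then α_n ≥ 0 for every n ≥ 2. -/
open PowerSeries

/-- Composition `f ∘ g` of formal power series (intended for `g` with zero
constant coefficient, in which case `coeff n (g ^ k) = 0` for `k > n` and the
finite sum below gives the usual substitution of `g` into `f`). -/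
noncomputable def psComp (f g : PowerSeries ℝ) : PowerSeries ℝ :=
  PowerSeries.mk fun n =>
    ∑ k ∈ Finset.range (n + 1), PowerSeries.coeff k f * PowerSeries.coeff n (g ^ k)

/-!
Write `ψ = X + φ` and `g = φ - ψ ^ d`. Comparing `n`-th coefficients in the invariance equation
gives `φₙ = 2 [ψ ^ d]ₙ + [φ ∘ g]ₙ` and `gₙ = [ψ ^ d]ₙ + [φ ∘ g]ₙ`. As `ψ` has no constant term and
`d ≥ 2`, `[ψ ^ d]ₙ` is a polynomial with nonnegative coefficients in the `ψₘ` with `m < n`; as `φ`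
and `g` have order at least `2`, the same holds for `[φ ∘ g]ₙ` in the `φₖ`, `gₘ` with `k, m < n`
(the only term containing `φₙ` is `φₙ [gⁿ]ₙ = 0`). Strong induction on `n` then shows `φₙ ≥ 0`
and `gₙ ≥ 0` simultaneously.
-/

namespace PowerSeries

section Nonneg

variable {R : Type*} [CommSemiring R] [PartialOrder R] [IsOrderedRing R] {n : ℕ}

theorem coeff_mul_nonneg {f g : R⟦X⟧} (hf : ∀ i ≤ n, 0 ≤ coeff i f)
    (hg : ∀ i ≤ n, 0 ≤ coeff i g) : 0 ≤ coeff n (f * g) := by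
  rw [coeff_mul]
  refine Finset.sum_nonneg fun p hp => mul_nonneg (hf _ ?_) (hg _ ?_) <;>
    linarith [Finset.HasAntidiagonal.mem_antidiagonal.mp hp]

theorem coeff_pow_nonneg {f : R⟦X⟧} (hf : ∀ i ≤ n, 0 ≤ coeff i f) (k : ℕ) :
    0 ≤ coeff n (f ^ k) := by
  induction k generalizing n with
  | zero => rw [pow_zero, coeff_one]; split_ifs <;> simp
  | succ k ih =>
    rw [pow_succ]
    exact coeff_mul_nonneg (fun i hi => ih fun j hj => hf j (hj.trans hi)) hf

theorem coeff_pow_nonneg_of_X_dvd {u : R⟦X⟧} (hu : X ∣ u) {k : ℕ} (hk : 2 ≤ k)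
    (hlt : ∀ m < n, 0 ≤ coeff m u) : 0 ≤ coeff n (u ^ k) := by
  obtain ⟨v, rfl⟩ := hu
  rw [mul_pow, coeff_X_pow_mul']
  split_ifs with hkn
  · refine coeff_pow_nonneg (fun i hi => ?_) k
    rw [← coeff_succ_X_mul]
    exact hlt _ (by omega)
  · exact le_rfl

end Nonneg

theorem coeff_pow_eq_zero_of_X_pow_dvd {R : Type*} [CommSemiring R] {u : R⟦X⟧} {j k n : ℕ}
    (hu : X ^ j ∣ u) (hn : n < j * k) : coeff n (u ^ k) = 0 :=
  X_pow_dvd_iff.mp (pow_mul (X : R⟦X⟧) j k ▸ pow_dvd_pow_of_dvd hu k) n hn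

end PowerSeries

theorem coeff_psComp (f g : PowerSeries ℝ) (n : ℕ) :
    coeff n (psComp f g) = ∑ k ∈ Finset.range (n + 1), coeff k f * coeff n (g ^ k) :=
  coeff_mk _ _

theorem coeff_psComp_nonneg {f g : PowerSeries ℝ} (hf : X ^ 2 ∣ f) (hg : X ^ 2 ∣ g) {n : ℕ}
    (hf_lt : ∀ k < n, 0 ≤ coeff k f) (hg_lt : ∀ m < n, 0 ≤ coeff m g) :
    0 ≤ coeff n (psComp f g) := by
  rw [coeff_psComp]
  refine Finset.sum_nonneg fun k hk => ?_
  rcases lt_or_ge k 2 with hk2 | hk2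
  · rw [X_pow_dvd_iff.mp hf k hk2, zero_mul]
  rcases (Finset.mem_range_succ_iff.mp hk).lt_or_eq with hkn | rfl
  · exact mul_nonneg (hf_lt k hkn)
      (coeff_pow_nonneg_of_X_dvd ((dvd_pow_self X two_ne_zero).trans hg) hk2 hg_lt)
  · rw [coeff_pow_eq_zero_of_X_pow_dvd hg (by omega), mul_zero]

theorem stmt5_general (d : ℕ) (hd : 2 ≤ d) (φ : PowerSeries ℝ)
    (h0 : PowerSeries.coeff 0 φ = 0) (h1 : PowerSeries.coeff 1 φ = 0)
    (hinv : φ - 2 * (PowerSeries.X + φ) ^ d =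
      psComp φ (φ - (PowerSeries.X + φ) ^ d)) :
    ∀ n : ℕ, 2 ≤ n → 0 ≤ PowerSeries.coeff n φ := by
  set ψ := X + φ
  set g := φ - ψ ^ d
  have hφ : X ^ 2 ∣ φ := X_pow_dvd_iff.mpr fun m hm => by interval_cases m <;> assumption
  have hψ : X ∣ ψ := dvd_add dvd_rfl ((dvd_pow_self X two_ne_zero).trans hφ)
  have hg : X ^ 2 ∣ g := dvd_sub hφ ((pow_dvd_pow X hd).trans (pow_dvd_pow_of_dvd hψ d))
  have key : ∀ n, 0 ≤ coeff n φ ∧ 0 ≤ coeff n g := by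
    intro n
    induction n using Nat.strong_induction_on with
    | _ n ih =>
      have hψn : 0 ≤ coeff n (ψ ^ d) := coeff_pow_nonneg_of_X_dvd hψ hd fun m hm => by
        simp only [ψ, map_add, coeff_X]
        split_ifs <;> linarith [(ih m hm).1]
      have hcomp : 0 ≤ coeff n (psComp φ g) :=
        coeff_psComp_nonneg hφ hg (fun k hk => (ih k hk).1) (fun m hm => (ih m hm).2)
      have hn := congrArg (coeff n) hinv
      simp only [map_sub, two_mul, map_add] at hn
      simp only [g, map_sub]
      constructor <;> linarith
  exact fun n _ => (key n).1

/-- for even `d`, all coefficients of the stable manifold series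
are nonnegative. -/
theorem stmt5 (d : ℕ) (hd : 2 ≤ d) (heven : Even d) (φ : PowerSeries ℝ)
    (h0 : PowerSeries.coeff 0 φ = 0) (h1 : PowerSeries.coeff 1 φ = 0)
    (hinv : φ - 2 * (PowerSeries.X + φ) ^ d =
      psComp φ (φ - (PowerSeries.X + φ) ^ d)) :
    ∀ n : ℕ, 2 ≤ n → 0 ≤ PowerSeries.coeff n φ :=
  stmt5_general d hd φ h0 h1 hinv
end

section
/- Let d ≥ 3 be odd and T_d := T_{1,d}. Let Q* ⊂ ℝ² be the convex hull of the six points (2^{1−d}, 0), (2^{1−d}, 2^{1−d}), (0, 2^{1−d}), (−2^{−d}, 0), (−2^{−d}, −2^{−d}), (0, −2^{−d}). Then Q* ⊆ 𝒜_d(0); in particular the segment [−1/2, 0] × {0} is contained in 𝒜_d(0). Moreover 𝒜_d(0) is an open and simply connected subset of ℝ². -/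
/-- The model map `T_{a,d}(x,y) = (y − a(x+y)^d, y − 2a(x+y)^d)`. -/
noncomputable def Tmap (a : ℝ) (d : ℕ) (p : ℝ × ℝ) : ℝ × ℝ :=
  (p.2 - a * (p.1 + p.2) ^ d, p.2 - 2 * a * (p.1 + p.2) ^ d)

/-- The basin of attraction of the origin for `T_{a,d}`. -/
noncomputable def basin (a : ℝ) (d : ℕ) : Set (ℝ × ℝ) :=
  {p : ℝ × ℝ | Filter.Tendsto (fun n => (Tmap a d)^[n] p) Filter.atTop (nhds (0, 0))}

/-- The hexagon `Q* = Q_{1/2}`: convex hull of the six indicated vertices,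
with `2·(1/2)^d = 2^{1−d}` and `(1/2)^d = 2^{−d}`. -/
noncomputable def Qstar (d : ℕ) : Set (ℝ × ℝ) :=
  convexHull ℝ
    {(((2 : ℝ) ^ ((1 : ℤ) - (d : ℤ)), (0 : ℝ))),
     (((2 : ℝ) ^ ((1 : ℤ) - (d : ℤ)), (2 : ℝ) ^ ((1 : ℤ) - (d : ℤ)))),
     (((0 : ℝ), (2 : ℝ) ^ ((1 : ℤ) - (d : ℤ)))),
     ((-(2 : ℝ) ^ (-(d : ℤ)), (0 : ℝ))),
     ((-(2 : ℝ) ^ (-(d : ℤ)), -(2 : ℝ) ^ (-(d : ℤ)))),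
     (((0 : ℝ), -(2 : ℝ) ^ (-(d : ℤ))))}

/-! In the coordinates `u = x + y`, `v = x - y` the map reads `(u, v) ↦ (u - 3u^d - v, u^d)`.
For odd `d` and small `u` the weight `W = |u| + 2|v|` drops by at least `|v| + |u|^d`, so the
sublevel set `{W < 11/20}` is a convex forward-invariant region on which every orbit tends to `0`.
The basin is therefore the increasing union of the preimages of this region under the iterates of
`T_d`. Since an odd power is invertible, `T_d` is a homeomorphism, so these preimages are open and
contractible; an increasing union of open simply connected sets is simply connected, as every loop
has compact image and so lies in one of them. Finally `Q*` and the image of the segment under `T_d`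
lie in the sup-norm ball of radius `1/4`, which `T_d` maps into the region. -/

open Filter Function Set Topology Metric

section Topology

variable {X : Type*} [TopologicalSpace X]

theorem IsPathConnected.iUnion_of_directed {ι : Type*} [Nonempty ι] {S : ι → Set X}
    (hdir : Directed (· ⊆ ·) S) (hS : ∀ i, IsPathConnected (S i)) :
    IsPathConnected (⋃ i, S i) := by
  refine isPathConnected_iff.mpr ⟨?_, fun x hx y hy => ?_⟩
  · obtain ⟨i⟩ := ‹Nonempty ι›
    exact (hS i).nonempty.mono (subset_iUnion S i)
  obtain ⟨i, hxi⟩ := mem_iUnion.mp hx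
  obtain ⟨j, hyj⟩ := mem_iUnion.mp hy
  obtain ⟨k, hik, hjk⟩ := hdir i j
  exact ((hS k).joinedIn x (hik hxi) y (hjk hyj)).mono (subset_iUnion S k)

theorem IsSimplyConnected.iUnion_of_directed {ι : Type*} [Nonempty ι] {S : ι → Set X}
    (hdir : Directed (· ⊆ ·) S) (hopen : ∀ i, IsOpen (S i)) (hS : ∀ i, IsSimplyConnected (S i)) :
    IsSimplyConnected (⋃ i, S i) := by
  rw [isSimplyConnected_iff_exists_homotopy_refl_forall_mem]
  refine ⟨.iUnion_of_directed hdir fun i => (hS i).isPathConnected, fun x γ hγ => ?_⟩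
  obtain ⟨i, hi⟩ := (isCompact_range γ.continuous).elim_directed_cover S hopen
    (range_subset_iff.mpr hγ) hdir
  obtain ⟨-, hloops⟩ := isSimplyConnected_iff_exists_homotopy_refl_forall_mem.mp (hS i)
  obtain ⟨F, hF⟩ := hloops x γ fun t => hi (mem_range_self t)
  exact ⟨F, fun t => subset_iUnion S i (hF t)⟩

theorem Homeomorph.isSimplyConnected_preimage_iterate (e : X ≃ₜ X) {s : Set X}
    (hs : IsSimplyConnected s) (n : ℕ) : IsSimplyConnected ((⇑e)^[n] ⁻¹' s) := by
  induction n with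
  | zero => exact hs
  | succ n ih => rwa [iterate_succ, preimage_comp, e.isSimplyConnected_preimage]

theorem setOf_tendsto_iterate_eq_iUnion_preimage {f : X → X} {x₀ : X} {U : Set X}
    (hU : IsOpen U) (hx₀ : x₀ ∈ U) (hconv : ∀ p ∈ U, Tendsto (fun n => f^[n] p) atTop (𝓝 x₀)) :
    {p | Tendsto (fun n => f^[n] p) atTop (𝓝 x₀)} = ⋃ n, f^[n] ⁻¹' U := by
  ext p
  refine ⟨fun hp => mem_iUnion.mpr (hp.eventually (hU.mem_nhds hx₀)).exists, fun hp => ?_⟩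
  obtain ⟨n, hn⟩ := mem_iUnion.mp hp
  refine (tendsto_add_atTop_iff_nat n).mp ?_
  simpa only [iterate_add_apply] using hconv _ hn

theorem Convex.isSimplyConnected {E : Type*} [AddCommGroup E] [Module ℝ E] [TopologicalSpace E]
    [ContinuousAdd E] [ContinuousSMul ℝ E] {s : Set E} (hs : Convex ℝ s) (hne : s.Nonempty) : IsSimplyConnected s :=
  have := hs.contractibleSpace hne
  inferInstanceAs (SimplyConnectedSpace s)

theorem Set.MapsTo.monotone_preimage_iterate {α : Type*} {f : α → α} {s : Set α}
    (hf : MapsTo f s s) : Monotone fun n => f^[n] ⁻¹' s :=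
  monotone_nat_of_le_succ fun n _ hp => by
    rw [mem_preimage, iterate_succ_apply']
    exact hf hp

end Topology

theorem tendsto_zero_of_le_sub_div_pow {w : ℕ → ℝ} {c : ℝ} {d : ℕ} (hc : 0 < c)
    (hw : ∀ n, 0 ≤ w n) (hstep : ∀ n, w (n + 1) ≤ w n - (w n / c) ^ d) :
    Tendsto w atTop (𝓝 0) := by
  have hanti : Antitone w := antitone_nat_of_succ_le fun n => by
    have := pow_nonneg (div_nonneg (hw n) hc.le) d
    linarith [hstep n]
  have hlim := tendsto_atTop_ciInf hanti ⟨0, forall_mem_range.mpr hw⟩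
  set L := ⨅ n, w n
  have hL : L ≤ L - (L / c) ^ d :=
    le_of_tendsto_of_tendsto' (hlim.comp (tendsto_add_atTop_nat 1))
      (hlim.sub ((hlim.div_const c).pow d)) hstep
  have hL0 : L = 0 := by
    refine le_antisymm (not_lt.mp fun hpos => ?_) (le_ciInf hw)
    linarith [pow_pos (div_pos hpos hc) d]
  rwa [hL0] at hlim

section Tmap

variable {d : ℕ}

theorem tmap_fst_add_snd (d : ℕ) (p : ℝ × ℝ) :
    (Tmap 1 d p).1 + (Tmap 1 d p).2 = p.1 + p.2 - 3 * (p.1 + p.2) ^ d - (p.1 - p.2) := by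
  simp only [Tmap]; ring

theorem tmap_fst_sub_snd (d : ℕ) (p : ℝ × ℝ) :
    (Tmap 1 d p).1 - (Tmap 1 d p).2 = (p.1 + p.2) ^ d := by
  simp only [Tmap]; ring

noncomputable def lyapunov (p : ℝ × ℝ) : ℝ := |p.1 + p.2| + 2 * |p.1 - p.2|

theorem abs_add_add_abs_sub_eq_two_mul_norm (p : ℝ × ℝ) :
    |p.1 + p.2| + |p.1 - p.2| = 2 * ‖p‖ := by
  rw [Prod.norm_def, Real.norm_eq_abs, Real.norm_eq_abs]
  rcases max_cases |p.1| |p.2| with ⟨h, _⟩ | ⟨h, _⟩ <;> rw [h] <;>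
    cases abs_cases p.1 <;> cases abs_cases p.2 <;> cases abs_cases (p.1 + p.2) <;>
      cases abs_cases (p.1 - p.2) <;> linarith

theorem norm_le_lyapunov (p : ℝ × ℝ) : ‖p‖ ≤ lyapunov p := by
  have := abs_add_add_abs_sub_eq_two_mul_norm p
  have := abs_nonneg (p.1 + p.2)
  have := abs_nonneg (p.1 - p.2)
  unfold lyapunov
  linarith

theorem lyapunov_tmap_le (hodd : Odd d) {p : ℝ × ℝ} (hp : 3 * |p.1 + p.2| ^ (d - 1) ≤ 1) :
    lyapunov (Tmap 1 d p) ≤ |p.1 + p.2| + |p.1 - p.2| - |p.1 + p.2| ^ d := by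
  set u := p.1 + p.2
  set v := p.1 - p.2
  have heven : Even (d - 1) := Nat.Odd.sub_odd hodd odd_one
  rw [heven.pow_abs] at hp
  have hpow : u ^ d = u ^ (d - 1) * u := by rw [← pow_succ, Nat.sub_one_add_one hodd.pos.ne']
  have hcontract : |u - 3 * u ^ d| = |u| - 3 * |u| ^ d := by
    have habs_pow : |u| ^ d = u ^ (d - 1) * |u| := by
      rw [← abs_pow, hpow, abs_mul, abs_of_nonneg (heven.pow_nonneg u)]
    rw [habs_pow, hpow, show u - 3 * (u ^ (d - 1) * u) = u * (1 - 3 * u ^ (d - 1)) by ring,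
      abs_mul, abs_of_nonneg (show 0 ≤ 1 - 3 * u ^ (d - 1) by linarith)]
    ring
  calc lyapunov (Tmap 1 d p) = |u - 3 * u ^ d - v| + 2 * |u| ^ d := by
        rw [lyapunov, tmap_fst_add_snd, tmap_fst_sub_snd, abs_pow]
    _ ≤ |u - 3 * u ^ d| + |v| + 2 * |u| ^ d := by gcongr; exact abs_sub _ _
    _ = |u| + |v| - |u| ^ d := by rw [hcontract]; ring

theorem Odd.pow_surjective (hodd : Odd d) : Surjective fun x : ℝ => x ^ d := by
  intro y
  have hd : d ≠ 0 := hodd.pos.ne'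
  rcases le_total 0 y with hy | hy
  · exact ⟨y ^ (d⁻¹ : ℝ), Real.rpow_inv_natCast_pow hy hd⟩
  · refine ⟨-(-y) ^ (d⁻¹ : ℝ), ?_⟩
    change (-(-y) ^ (d⁻¹ : ℝ)) ^ d = y
    rw [hodd.neg_pow, Real.rpow_inv_natCast_pow (neg_nonneg.mpr hy) hd, neg_neg]

noncomputable def oddPowOrderIso (hodd : Odd d) : ℝ ≃o ℝ :=
  StrictMono.orderIsoOfSurjective _ hodd.strictMono_pow hodd.pow_surjective

theorem pow_oddPowOrderIso_symm (hodd : Odd d) (y : ℝ) : (oddPowOrderIso hodd).symm y ^ d = y :=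
  (oddPowOrderIso hodd).apply_symm_apply y

theorem oddPowOrderIso_symm_pow_self (hodd : Odd d) (x : ℝ) :
    (oddPowOrderIso hodd).symm (x ^ d) = x :=
  (oddPowOrderIso hodd).symm_apply_apply x

noncomputable def tmapHomeomorph (hodd : Odd d) : (ℝ × ℝ) ≃ₜ (ℝ × ℝ) where
  toFun := Tmap 1 d
  invFun q := ((oddPowOrderIso hodd).symm (q.1 - q.2) - (2 * q.1 - q.2), 2 * q.1 - q.2)
  left_inv p := by
    dsimp only
    rw [tmap_fst_sub_snd, oddPowOrderIso_symm_pow_self]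
    ext <;> simp only [Tmap] <;> ring
  right_inv q := by
    ext <;> simp only [Tmap, sub_add_cancel, pow_oddPowOrderIso_symm] <;> ring
  continuous_toFun := by unfold Tmap; fun_prop
  continuous_invFun := by
    have := (oddPowOrderIso hodd).symm.toHomeomorph.continuous
    fun_prop

-- Any radius `r` with `1/2 < r` and `3 r² ≤ 1` would do: the first makes
-- `tmap_mem_trapRegion_of_norm_le` work, the second makes `lyapunov_tmap_le` apply inside.
noncomputable def trapRegion : Set (ℝ × ℝ) := {p | lyapunov p < 11 / 20}

theorem isOpen_trapRegion : IsOpen trapRegion :=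
  isOpen_lt (by unfold lyapunov; fun_prop) continuous_const

theorem convexOn_lyapunov : ConvexOn ℝ univ lyapunov := by
  have hnorm := convexOn_norm (E := ℝ) convex_univ
  have hsum := hnorm.comp_linearMap (LinearMap.fst ℝ ℝ ℝ + LinearMap.snd ℝ ℝ ℝ)
  have hdiff := hnorm.comp_linearMap (LinearMap.fst ℝ ℝ ℝ - LinearMap.snd ℝ ℝ ℝ)
  exact hsum.add (hdiff.smul zero_le_two)

theorem convex_trapRegion : Convex ℝ trapRegion := by
  have h := convexOn_lyapunov.convex_lt (11 / 20)
  simp only [mem_univ, true_and] at h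
  exact h

theorem zero_mem_trapRegion : (0 : ℝ × ℝ) ∈ trapRegion := by
  norm_num [trapRegion, lyapunov]

theorem three_mul_pow_pred_le_one (hd : 3 ≤ d) {t : ℝ} (h0 : 0 ≤ t) (ht : t ≤ 11 / 20) :
    3 * t ^ (d - 1) ≤ 1 := by
  have : t ^ (d - 1) ≤ (11 / 20) ^ 2 :=
    calc t ^ (d - 1) ≤ (11 / 20) ^ (d - 1) := by gcongr
      _ ≤ (11 / 20) ^ 2 := pow_le_pow_of_le_one (by norm_num) (by norm_num) (by omega)
  linarith

theorem lyapunov_tmap_le_sub_pow (hd : 3 ≤ d) (hodd : Odd d) {p : ℝ × ℝ} (hp : p ∈ trapRegion) :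
    lyapunov (Tmap 1 d p) ≤ lyapunov p - (lyapunov p / 4) ^ d := by
  set a := |p.1 + p.2|
  set b := |p.1 - p.2|
  have ha : 0 ≤ a := abs_nonneg _
  have hb : 0 ≤ b := abs_nonneg _
  have hW : lyapunov p = a + 2 * b := rfl
  have hWlt : a + 2 * b < 11 / 20 := hp
  have hstep := lyapunov_tmap_le hodd (three_mul_pow_pred_le_one hd ha (by linarith))
  have hW0 : 0 ≤ lyapunov p / 4 := by rw [hW]; positivity
  have hdecr : (lyapunov p / 4) ^ d ≤ b + a ^ d := by
    rcases le_total b a with hba | hab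
    · calc (lyapunov p / 4) ^ d ≤ a ^ d := pow_le_pow_left₀ hW0 (by linarith) d
        _ ≤ b + a ^ d := by linarith
    · calc (lyapunov p / 4) ^ d ≤ b ^ d := pow_le_pow_left₀ hW0 (by linarith) d
        _ ≤ b := pow_le_of_le_one hb (by linarith) (by omega)
        _ ≤ b + a ^ d := by linarith [pow_nonneg ha d]
  linarith

theorem mapsTo_tmap_trapRegion (hd : 3 ≤ d) (hodd : Odd d) :
    MapsTo (Tmap 1 d) trapRegion trapRegion := fun p hp => by
  have hW : 0 ≤ lyapunov p / 4 := by unfold lyapunov; positivity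
  have : lyapunov p < 11 / 20 := hp
  show lyapunov (Tmap 1 d p) < 11 / 20
  linarith [lyapunov_tmap_le_sub_pow hd hodd hp, pow_nonneg hW d]

theorem tendsto_iterate_tmap_of_mem_trapRegion (hd : 3 ≤ d) (hodd : Odd d) {p : ℝ × ℝ}
    (hp : p ∈ trapRegion) : Tendsto (fun n => (Tmap 1 d)^[n] p) atTop (𝓝 0) := by
  have hmem n : (Tmap 1 d)^[n] p ∈ trapRegion := ((mapsTo_tmap_trapRegion hd hodd).iterate n) hp
  have hlyap : Tendsto (fun n => lyapunov ((Tmap 1 d)^[n] p)) atTop (𝓝 0) := by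
    refine tendsto_zero_of_le_sub_div_pow (d := d) four_pos (fun n => ?_) fun n => ?_
    · unfold lyapunov; positivity
    · rw [iterate_succ_apply']
      exact lyapunov_tmap_le_sub_pow hd hodd (hmem n)
  exact squeeze_zero_norm (fun n => norm_le_lyapunov _) hlyap

theorem tmap_mem_trapRegion_of_norm_le (hd : 3 ≤ d) (hodd : Odd d) {p : ℝ × ℝ}
    (hp : ‖p‖ ≤ 1 / 4) : Tmap 1 d p ∈ trapRegion := by
  have huv := abs_add_add_abs_sub_eq_two_mul_norm p
  have hv := abs_nonneg (p.1 - p.2)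
  have hu := abs_nonneg (p.1 + p.2)
  have hstep := lyapunov_tmap_le hodd (three_mul_pow_pred_le_one hd hu (by linarith))
  show lyapunov (Tmap 1 d p) < 11 / 20
  linarith [pow_nonneg hu d]

theorem norm_tmap_le_of_abs_le (hd : 3 ≤ d) {x : ℝ} (hx : |x| ≤ 1 / 2) :
    ‖Tmap 1 d (x, 0)‖ ≤ 1 / 4 := by
  have hxd : |x| ^ d ≤ 1 / 8 :=
    calc |x| ^ d ≤ (1 / 2) ^ d := by gcongr
      _ ≤ (1 / 2) ^ 3 := pow_le_pow_of_le_one (by norm_num) (by norm_num) hd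
      _ = 1 / 8 := by norm_num
  simp only [Tmap, Prod.norm_def, Real.norm_eq_abs, zero_sub, add_zero, abs_neg, abs_mul,
    abs_pow, abs_one, abs_two]
  exact max_le (by linarith [pow_nonneg (abs_nonneg x) d]) (by linarith)

theorem Qstar_subset_closedBall (hd : 3 ≤ d) : Qstar d ⊆ closedBall 0 (1 / 4) := by
  set b : ℝ := 2 ^ (-(d : ℤ)) with hb_def
  have hb0 : 0 < b := zpow_pos two_pos _
  have hb : b ≤ 1 / 8 :=
    calc b ≤ 2 ^ (-3 : ℤ) := zpow_le_zpow_right₀ one_le_two (by omega)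
      _ = 1 / 8 := by norm_num
  have htwo : (2 : ℝ) ^ ((1 : ℤ) - d) = 2 * b := by
    rw [sub_eq_add_neg, zpow_add₀ two_ne_zero, zpow_one]
  refine convexHull_min ?_ (convex_closedBall 0 (1 / 4))
  intro p hp
  simp only [mem_insert_iff, mem_singleton_iff, htwo, ← hb_def] at hp
  rcases hp with rfl | rfl | rfl | rfl | rfl | rfl <;>
    simp only [mem_closedBall_zero_iff, Prod.norm_def, Real.norm_eq_abs, abs_neg, abs_zero,
      abs_of_pos hb0, abs_of_pos (mul_pos two_pos hb0), max_le_iff] <;>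
    constructor <;> linarith

theorem basin_eq_iUnion_preimage_trapRegion (hd : 3 ≤ d) (hodd : Odd d) :
    basin 1 d = ⋃ n, (Tmap 1 d)^[n] ⁻¹' trapRegion :=
  setOf_tendsto_iterate_eq_iUnion_preimage isOpen_trapRegion zero_mem_trapRegion
    fun _ hp => tendsto_iterate_tmap_of_mem_trapRegion hd hodd hp

end Tmap

/-- for odd `d ≥ 3`, `Q* ⊆ 𝒜_d(0)`, the segment
`[−1/2,0] × {0}` lies in the basin, and the basin is open and simply
connected. -/
theorem stmt10 (d : ℕ) (hd : 3 ≤ d) (hodd : Odd d) :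
    Qstar d ⊆ basin 1 d ∧
    (Set.Icc (-(1 : ℝ) / 2) 0 ×ˢ ({0} : Set ℝ)) ⊆ basin 1 d ∧
    IsOpen (basin 1 d) ∧
    SimplyConnectedSpace ↥(basin 1 d) := by
  have hbasin := basin_eq_iUnion_preimage_trapRegion hd hodd
  have hopen n : IsOpen ((Tmap 1 d)^[n] ⁻¹' trapRegion) :=
    isOpen_trapRegion.preimage ((tmapHomeomorph hodd).continuous.iterate n)
  have hsc n : IsSimplyConnected ((Tmap 1 d)^[n] ⁻¹' trapRegion) :=
    (tmapHomeomorph hodd).isSimplyConnected_preimage_iterate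
      (convex_trapRegion.isSimplyConnected ⟨0, zero_mem_trapRegion⟩) n
  rw [hbasin]
  refine ⟨fun p hp => mem_iUnion.mpr ⟨1, ?_⟩, ?_, isOpen_iUnion hopen,
    IsSimplyConnected.iUnion_of_directed
      (mapsTo_tmap_trapRegion hd hodd).monotone_preimage_iterate.directed_le hopen hsc⟩
  · exact tmap_mem_trapRegion_of_norm_le hd hodd
      (mem_closedBall_zero_iff.mp (Qstar_subset_closedBall hd hp))
  · rintro ⟨x, y⟩ ⟨hx, rfl⟩
    refine mem_iUnion.mpr ⟨2, tmap_mem_trapRegion_of_norm_le hd hodd (norm_tmap_le_of_abs_le hd ?_)⟩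
    exact abs_le.mpr ⟨by linarith [hx.1], by linarith [hx.2]⟩
end

section
/- Let d ≥ 3 be odd and let T_d(x,y) = (y + (x+y)^d, y + 2(x+y)^d) (i.e. T_{a,d} with a = −1). Let Q₄ = {(x,y) ∈ ℝ² : x ≥ 0, y ≤ 0} be the closed fourth quadrant. If (x₀,y₀) ∈ ℝ² is such that (x₂,y₂) := T_d²(x₀,y₀) ∈ Q₄, then x₂ ≤ x₀/2. -/
def fourthQuadrant : Set (ℝ × ℝ) := {p | 0 ≤ p.1 ∧ p.2 ≤ 0}

lemma Tmap_snd_sub_fst (a : ℝ) (d : ℕ) (p : ℝ × ℝ) :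
    (Tmap a d p).2 - (Tmap a d p).1 = -a * (p.1 + p.2) ^ d := by
  simp only [Tmap]; ring

lemma Tmap_fst_add_snd (a : ℝ) (d : ℕ) (p : ℝ × ℝ) :
    (Tmap a d p).1 + (Tmap a d p).2 = 2 * p.2 - 3 * a * (p.1 + p.2) ^ d := by
  simp only [Tmap]; ring

lemma of_Tmap_mem_fourthQuadrant {a : ℝ} (ha : a < 0) {d : ℕ} (hd : Odd d) {q : ℝ × ℝ}
    (hq : Tmap a d q ∈ fourthQuadrant) :
    q.1 + q.2 ≤ 0 ∧ 0 ≤ q.2 ∧ (Tmap a d q).1 ≤ q.2 := by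
  obtain ⟨hx, hy⟩ := hq
  have hdiff := Tmap_snd_sub_fst a d q
  have hpos : 0 ≤ a * (q.1 + q.2) ^ d := by linarith
  have hpow : (q.1 + q.2) ^ d ≤ 0 := nonpos_of_mul_nonneg_right hpos ha
  have hfst : (Tmap a d q).1 = q.2 - a * (q.1 + q.2) ^ d := rfl
  exact ⟨hd.pow_nonpos_iff.mp hpow, by linarith, by linarith⟩

theorem Tmap_iterate_two_fst_le_half {a : ℝ} (ha : a < 0) {d : ℕ} (hd : Odd d) {p : ℝ × ℝ}
    (hp : (Tmap a d)^[2] p ∈ fourthQuadrant) :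
    ((Tmap a d)^[2] p).1 ≤ p.1 / 2 := by
  rw [Function.iterate_succ_apply, Function.iterate_one] at hp ⊢
  obtain ⟨hsum, hsnd, hfst⟩ := of_Tmap_mem_fourthQuadrant ha hd hp
  rw [Tmap_fst_add_snd] at hsum
  have hsnd_eq : (Tmap a d p).2 = p.2 - 2 * a * (p.1 + p.2) ^ d := rfl
  have hneg : a * (p.1 + p.2) ^ d ≤ 0 := by linarith
  have hs : 0 ≤ p.1 + p.2 := hd.pow_nonneg_iff.mp (nonneg_of_mul_nonpos_right hneg ha)
  linarith

theorem stmt18_general (d : ℕ) (hodd : Odd d) (p : ℝ × ℝ)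
    (h : 0 ≤ ((Tmap (-1) d)^[2] p).1 ∧ ((Tmap (-1) d)^[2] p).2 ≤ 0) :
    ((Tmap (-1) d)^[2] p).1 ≤ p.1 / 2 :=
  Tmap_iterate_two_fst_le_half neg_one_lt_zero hodd h

/-- for odd `d ≥ 3` and the map with `a = −1`, if the second
iterate of `(x₀,y₀)` lies in the closed fourth quadrant `Q₄`, then its first
coordinate is at most `x₀/2`. -/
theorem stmt18 (d : ℕ) (hd : 3 ≤ d) (hodd : Odd d) (p : ℝ × ℝ)
    (h : 0 ≤ ((Tmap (-1) d)^[2] p).1 ∧ ((Tmap (-1) d)^[2] p).2 ≤ 0) :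
    ((Tmap (-1) d)^[2] p).1 ≤ p.1 / 2 :=
  stmt18_general d hodd p h
end
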